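/- arXiv:2406.03709 — 3 statements merged into one kernel-verified Lean document; each statement's English description precedes it below -/
import Mathlib

section
/- Let (P₊, P₋) be a positive solution of the Riccati system. Then there is a constant C > 0 such that for every t ∈ [0,T] there exist v̂₊(t), v̂₋(t) ∈ ℝ^m₊ with |v̂₊(t)| ≤ C and |v̂₋(t)| ≤ C satisfying H₊(t, v̂₊(t), P_{+,t}, P_{−,t}) = H*₊(t, P_{+,t}, P_{−,t}) and H₋(t, v̂₋(t), P_{+,t}, P_{−,t}) = H*₋(t, P_{+,t}, P_{−,t}); i.e. the infima defining H*₊ and H*₋ along the solution are attained at points of uniformly bounded norm. -/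
open MeasureTheory Set

/-- The Hamiltonian `H₊(t, v, P₊, P₋)` of the constrained LQ problem. -/
noncomputable def Hplus {E : Type} [MeasurableSpace E] {m n ℓ : ℕ}
    (μ : ℝ → Fin m → ℝ) (σ : ℝ → Matrix (Fin m) (Fin n) ℝ)
    (ν : Fin ℓ → Measure E) (β : Fin ℓ → ℝ → E → Fin m → ℝ)
    (t : ℝ) (v : Fin m → ℝ) (Pp Pm : ℝ) : ℝ :=
  Pp * ∑ k, (∑ i, σ t i k * v i) ^ 2 + 2 * Pp * ∑ i, μ t i * v i
    + ∑ j, ∫ e, (Pp * ((max (1 + ∑ i, v i * β j t e i) 0) ^ 2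
          - 1 - 2 * ∑ i, v i * β j t e i)
        + Pm * (max (-(1 + ∑ i, v i * β j t e i)) 0) ^ 2) ∂(ν j)

/-- The Hamiltonian `H₋(t, v, P₊, P₋)` of the constrained LQ problem. -/
noncomputable def Hminus {E : Type} [MeasurableSpace E] {m n ℓ : ℕ}
    (μ : ℝ → Fin m → ℝ) (σ : ℝ → Matrix (Fin m) (Fin n) ℝ)
    (ν : Fin ℓ → Measure E) (β : Fin ℓ → ℝ → E → Fin m → ℝ)
    (t : ℝ) (v : Fin m → ℝ) (Pp Pm : ℝ) : ℝ :=
  Pm * ∑ k, (∑ i, σ t i k * v i) ^ 2 - 2 * Pm * ∑ i, μ t i * v i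
    + ∑ j, ∫ e, (Pm * ((max (1 - ∑ i, v i * β j t e i) 0) ^ 2
          - 1 + 2 * ∑ i, v i * β j t e i)
        + Pp * (max (-(1 - ∑ i, v i * β j t e i)) 0) ^ 2) ∂(ν j)

/-- `H*₊(t, P₊, P₋) = inf_{v ∈ ℝ^m₊} H₊(t, v, P₊, P₋)`. -/
noncomputable def HstarPlus {E : Type} [MeasurableSpace E] {m n ℓ : ℕ}
    (μ : ℝ → Fin m → ℝ) (σ : ℝ → Matrix (Fin m) (Fin n) ℝ)
    (ν : Fin ℓ → Measure E) (β : Fin ℓ → ℝ → E → Fin m → ℝ)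
    (t : ℝ) (Pp Pm : ℝ) : ℝ :=
  sInf ((fun v => Hplus μ σ ν β t v Pp Pm) '' {v : Fin m → ℝ | ∀ i, 0 ≤ v i})

/-- `H*₋(t, P₊, P₋) = inf_{v ∈ ℝ^m₊} H₋(t, v, P₊, P₋)`. -/
noncomputable def HstarMinus {E : Type} [MeasurableSpace E] {m n ℓ : ℕ}
    (μ : ℝ → Fin m → ℝ) (σ : ℝ → Matrix (Fin m) (Fin n) ℝ)
    (ν : Fin ℓ → Measure E) (β : Fin ℓ → ℝ → E → Fin m → ℝ)
    (t : ℝ) (Pp Pm : ℝ) : ℝ :=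
  sInf ((fun v => Hminus μ σ ν β t v Pp Pm) '' {v : Fin m → ℝ | ∀ i, 0 ≤ v i})

/-- `Σ_t = σ_t σ_tᵀ + ∑_j ∫_E β_{j,t}(e) β_{j,t}(e)ᵀ ν_j(de)`, defined entrywise. -/
noncomputable def SigmaMat {E : Type} [MeasurableSpace E] {m n ℓ : ℕ}
    (σ : ℝ → Matrix (Fin m) (Fin n) ℝ) (ν : Fin ℓ → Measure E)
    (β : Fin ℓ → ℝ → E → Fin m → ℝ) (t : ℝ) : Matrix (Fin m) (Fin m) ℝ :=
  Matrix.of fun i k => (∑ j', σ t i j' * σ t k j') + ∑ j, ∫ e, β j t e i * β j t e k ∂(ν j)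

/-- A pair of continuous positive functions `(P₊, P₋)` on `[0,T]` solving the Riccati
system `P_{±,t} = 1 + ∫_t^T H*_±(s, P_{+,s}, P_{−,s}) ds`. -/
def IsPositiveRiccatiSolution {E : Type} [MeasurableSpace E] {m n ℓ : ℕ}
    (μ : ℝ → Fin m → ℝ) (σ : ℝ → Matrix (Fin m) (Fin n) ℝ)
    (ν : Fin ℓ → Measure E) (β : Fin ℓ → ℝ → E → Fin m → ℝ)
    (T : ℝ) (Pp Pm : ℝ → ℝ) : Prop :=
  ContinuousOn Pp (Icc 0 T) ∧ ContinuousOn Pm (Icc 0 T) ∧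
  (∀ t ∈ Icc (0:ℝ) T, 0 < Pp t ∧ 0 < Pm t) ∧
  (∀ t ∈ Icc (0:ℝ) T, Pp t = 1 + ∫ s in t..T, HstarPlus μ σ ν β s (Pp s) (Pm s)) ∧
  (∀ t ∈ Icc (0:ℝ) T, Pm t = 1 + ∫ s in t..T, HstarMinus μ σ ν β s (Pp s) (Pm s))

/-!
At a fixed time, `H₊(t, ·, p, q)` is `p|σᵀv|² + 2p μᵀv` plus the integrals of the jump cost
`g(y) = p((1+y)⁺² − 1 − 2y) + q((1+y)⁻)²` at `y = v·β_j(e)`, and `H₋` is the same expression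
with `μ, β` negated and `p, q` swapped. Pointwise `g(y) ≥ k(y²/2 − 1)` whenever `0 ≤ k ≤ p, q`,
so uniform ellipticity gives the coercivity bound `H₊(v) ≥ (kδ/2)|v|² − a|v| − b`. As `H₊(0) = 0`,
every point outside a ball of radius `R(k, δ, a, b)` is beaten by `0`, and the continuous function
`H₊` attains its infimum over the closed orthant inside that ball. A positive solution is
continuous on the compact interval `[0,T]`, hence pinched between positive constants there, which
makes `k`, `a`, `b` and thus `R` uniform in `t`.
-/

theorem IsCompact.exists_isMinOn_of_lt_of_notMem {α β : Type*} [TopologicalSpace α]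
    [LinearOrder β] [TopologicalSpace β] [ClosedIicTopology β] {f : α → β} {s K : Set α}
    (hs : IsClosed s) (hK : IsCompact K) (hf : ContinuousOn f K) {x₀ : α} (hx₀ : x₀ ∈ s)
    (hout : ∀ x ∈ s, x ∉ K → f x₀ < f x) : ∃ x ∈ s ∩ K, IsMinOn f s x := by
  have hx₀K : x₀ ∈ K := by_contra fun h => lt_irrefl _ (hout x₀ hx₀ h)
  obtain ⟨x, hx, hmin⟩ :=
    (hK.inter_left hs).exists_isMinOn ⟨x₀, hx₀, hx₀K⟩ (hf.mono inter_subset_right)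
  refine ⟨x, hx, fun y hy => ?_⟩
  by_cases hyK : y ∈ K
  · exact hmin ⟨hy, hyK⟩
  · exact ((hmin ⟨hx₀, hx₀K⟩).trans (hout y hy hyK).le)

section EuclideanNorm

variable {ι : Type*} [Fintype ι]

theorem abs_le_sqrt_sum_sq (v : ι → ℝ) (i : ι) : |v i| ≤ √(∑ j, v j ^ 2) :=
  Real.abs_le_sqrt <|
    Finset.single_le_sum (f := fun j => v j ^ 2) (fun j _ => sq_nonneg (v j)) (Finset.mem_univ i)

theorem abs_sum_mul_le {c : ι → ℝ} {C : ℝ} (hc : ∀ i, |c i| ≤ C) (v : ι → ℝ) :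
    |∑ i, c i * v i| ≤ C * Fintype.card ι * √(∑ i, v i ^ 2) := by
  calc |∑ i, c i * v i| ≤ ∑ i, |c i| * |v i| := by
        simpa only [abs_mul] using Finset.abs_sum_le_sum_abs (fun i => c i * v i) Finset.univ
    _ ≤ ∑ _i : ι, C * √(∑ i, v i ^ 2) :=
        Finset.sum_le_sum fun i _ =>
          mul_le_mul (hc i) (abs_le_sqrt_sum_sq v i) (abs_nonneg _) ((abs_nonneg _).trans (hc i))
    _ = C * Fintype.card ι * √(∑ i, v i ^ 2) := by
        rw [Finset.sum_const, Finset.card_univ, nsmul_eq_mul]; ring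

theorem isCompact_setOf_sqrt_sum_sq_le (R : ℝ) : IsCompact {v : ι → ℝ | √(∑ i, v i ^ 2) ≤ R} := by
  refine Metric.isCompact_of_isClosed_isBounded (isClosed_le (by fun_prop) continuous_const)
    ((Metric.isBounded_closedBall (x := 0) (r := R)).subset fun v hv => ?_)
  rw [mem_closedBall_zero_iff, pi_norm_le_iff_of_nonneg ((Real.sqrt_nonneg _).trans hv)]
  exact fun i => (abs_le_sqrt_sum_sq v i).trans hv

end EuclideanNorm

theorem isClosed_setOf_forall_nonneg {ι : Type*} :
    IsClosed {v : ι → ℝ | ∀ i, 0 ≤ v i} := by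
  simp only [ofPred_forall]
  exact isClosed_iInter fun i => isClosed_le continuous_const (continuous_apply i)

noncomputable def jumpCost (p q y : ℝ) : ℝ :=
  p * ((max (1 + y) 0) ^ 2 - 1 - 2 * y) + q * (max (-(1 + y)) 0) ^ 2

theorem continuous_jumpCost (p q : ℝ) : Continuous (jumpCost p q) := by
  unfold jumpCost; fun_prop

theorem jumpCost_zero (p q : ℝ) : jumpCost p q 0 = 0 := by
  norm_num [jumpCost]

theorem le_jumpCost {k p q : ℝ} (hk : 0 ≤ k) (hkp : k ≤ p) (hkq : k ≤ q) (y : ℝ) :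
    k * (y ^ 2 / 2 - 1) ≤ jumpCost p q y := by
  rcases le_total 0 (1 + y) with h | h
  · rw [jumpCost, max_eq_left h, max_eq_right (by linarith)]
    nlinarith [mul_le_mul_of_nonneg_right hkp (sq_nonneg y)]
  · rw [jumpCost, max_eq_right h, max_eq_left (by linarith)]
    -- `2(1+y)² − (y² − 2) = (y+2)²`
    nlinarith [mul_le_mul_of_nonneg_right hkq (sq_nonneg (1 + y)),
      mul_nonneg hk (sq_nonneg (y + 2))]

section Integral

variable {E ι : Type*} [Fintype ι] {b : E → ι → ℝ} {C : ℝ} {g : ℝ → ℝ}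

theorem exists_bound_comp_sum (hg : Continuous g) (hb : ∀ e i, |b e i| ≤ C) (R : ℝ) :
    ∃ B, ∀ v : ι → ℝ, √(∑ i, v i ^ 2) ≤ R → ∀ e, |g (∑ i, v i * b e i)| ≤ B := by
  obtain ⟨B, hB⟩ := (isCompact_Icc (a := -(|C| * Fintype.card ι * R))
    (b := |C| * Fintype.card ι * R)).exists_bound_of_continuousOn hg.continuousOn
  refine ⟨B, fun v hv e => hB _ (abs_le.mp ?_)⟩
  simp only [mul_comm (v _)]
  calc |∑ i, b e i * v i| ≤ |C| * Fintype.card ι * √(∑ i, v i ^ 2) :=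
        abs_sum_mul_le (fun i => (hb e i).trans (le_abs_self C)) v
    _ ≤ |C| * Fintype.card ι * R := by gcongr

variable [MeasurableSpace E] {ν : Measure E}

theorem integrable_comp_sum [IsFiniteMeasure ν] (hg : Continuous g) (hbm : Measurable b)
    (hb : ∀ e i, |b e i| ≤ C) (v : ι → ℝ) :
    Integrable (fun e => g (∑ i, v i * b e i)) ν := by
  obtain ⟨B, hB⟩ := exists_bound_comp_sum hg hb (√(∑ i, v i ^ 2))
  exact .of_bound (by fun_prop) B (ae_of_all _ fun e => hB v le_rfl e)

theorem continuousOn_integral_comp_sum [IsFiniteMeasure ν] (hg : Continuous g)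
    (hbm : Measurable b) (hb : ∀ e i, |b e i| ≤ C) (R : ℝ) :
    ContinuousOn (fun v : ι → ℝ => ∫ e, g (∑ i, v i * b e i) ∂ν) {v | √(∑ i, v i ^ 2) ≤ R} := by
  obtain ⟨B, hB⟩ := exists_bound_comp_sum hg hb R
  exact continuousOn_of_dominated (bound := fun _ => B) (fun _ _ => by fun_prop)
    (fun v hv => ae_of_all _ (hB v hv)) (integrable_const B)
    (ae_of_all _ fun e => Continuous.continuousOn (by fun_prop))

end Integral

section FrozenHamiltonian

variable {E : Type*} [MeasurableSpace E] {ι κ J : Type*} [Fintype ι] [Fintype κ] [Fintype J]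
  (ν : J → Measure E) (c : ι → ℝ) (S : Matrix ι κ ℝ) (b : J → E → ι → ℝ) (p q : ℝ)

noncomputable def frozenHamiltonian (v : ι → ℝ) : ℝ :=
  p * ∑ k, (∑ i, S i k * v i) ^ 2 + 2 * p * ∑ i, c i * v i
    + ∑ j, ∫ e, jumpCost p q (∑ i, v i * b j e i) ∂(ν j)

theorem frozenHamiltonian_zero : frozenHamiltonian ν c S b p q 0 = 0 := by
  simp [frozenHamiltonian, jumpCost_zero]

variable {ν c S b p q} [∀ j, IsFiniteMeasure (ν j)] {Cb : ℝ}
  (hbm : ∀ j, Measurable (b j)) (hb : ∀ j e i, |b j e i| ≤ Cb)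
include hbm hb

theorem continuousOn_frozenHamiltonian (R : ℝ) :
    ContinuousOn (frozenHamiltonian ν c S b p q) {v | √(∑ i, v i ^ 2) ≤ R} :=
  (Continuous.continuousOn (by fun_prop)).add <| continuousOn_finsetSum _ fun j _ =>
    continuousOn_integral_comp_sum (continuous_jumpCost p q) (hbm j) (hb j) R

variable {Cc δ k K : ℝ} (hc : ∀ i, |c i| ≤ Cc)
  (hell : ∀ v : ι → ℝ, δ * ∑ i, v i ^ 2 ≤
    ∑ l, (∑ i, S i l * v i) ^ 2 + ∑ j, ∫ e, (∑ i, v i * b j e i) ^ 2 ∂(ν j))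
  (hkp : k ≤ p) (hkq : k ≤ q) (hpK : p ≤ K)
include hc hell hkp hkq hpK

theorem frozenHamiltonian_ge (hk : 0 ≤ k) (v : ι → ℝ) :
    k * δ / 2 * ∑ i, v i ^ 2 - 2 * K * Cc * Fintype.card ι * √(∑ i, v i ^ 2)
      - k * ∑ j, (ν j).real univ ≤ frozenHamiltonian ν c S b p q v := by
  have hjump : ∀ j, k / 2 * ∫ e, (∑ i, v i * b j e i) ^ 2 ∂(ν j) - k * (ν j).real univ
      ≤ ∫ e, jumpCost p q (∑ i, v i * b j e i) ∂(ν j) := by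
    intro j
    have hsq := integrable_comp_sum (ν := ν j) (continuous_pow 2) (hbm j) (hb j) v
    calc _ = ∫ e, k * ((∑ i, v i * b j e i) ^ 2 / 2 - 1) ∂(ν j) := by
          rw [integral_const_mul, integral_sub (hsq.div_const 2) (integrable_const 1),
            integral_div, integral_const, smul_eq_mul]
          ring
      _ ≤ _ := integral_mono ((hsq.div_const 2).sub (integrable_const 1) |>.const_mul k)
          (integrable_comp_sum (continuous_jumpCost p q) (hbm j) (hb j) v)
          fun e => le_jumpCost hk hkp hkq _
  have hjumps := Finset.sum_le_sum fun j (_ : j ∈ Finset.univ) => hjump j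
  rw [Finset.sum_sub_distrib, ← Finset.mul_sum, ← Finset.mul_sum] at hjumps
  have hlin := abs_le.mp (abs_sum_mul_le hc v)
  have hquad : k * ∑ l, (∑ i, S i l * v i) ^ 2 ≤ p * ∑ l, (∑ i, S i l * v i) ^ 2 :=
    mul_le_mul_of_nonneg_right hkp (Finset.sum_nonneg fun l _ => sq_nonneg _)
  have hell' := mul_le_mul_of_nonneg_left (hell v) (by positivity : 0 ≤ k / 2)
  unfold frozenHamiltonian
  nlinarith [Finset.sum_nonneg fun l (_ : l ∈ Finset.univ) => sq_nonneg (∑ i, S i l * v i)]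

theorem exists_isMinOn_frozenHamiltonian (hδ : 0 < δ) (hk : 0 < k) {R : ℝ} (hR1 : 1 ≤ R)
    (hR : (2 * K * Cc * Fintype.card ι + k * ∑ j, (ν j).real univ) / (k * δ / 2) ≤ R) :
    ∃ v : ι → ℝ, (∀ i, 0 ≤ v i) ∧ √(∑ i, v i ^ 2) ≤ R ∧
      IsMinOn (frozenHamiltonian ν c S b p q) {v | ∀ i, 0 ≤ v i} v := by
  have hout : ∀ w ∈ {v : ι → ℝ | ∀ i, 0 ≤ v i}, w ∉ {v : ι → ℝ | √(∑ i, v i ^ 2) ≤ R} →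
      frozenHamiltonian ν c S b p q 0 < frozenHamiltonian ν c S b p q w := by
    intro w _ hw
    rw [frozenHamiltonian_zero]
    have hF := frozenHamiltonian_ge (ν := ν) hbm hb hc hell hkp hkq hpK hk.le w
    set r := √(∑ i, w i ^ 2)
    have hRr : R < r := not_le.mp hw
    have hr2 : r ^ 2 = ∑ i, w i ^ 2 := Real.sq_sqrt (Finset.sum_nonneg fun i _ => sq_nonneg (w i))
    have hV : 0 ≤ ∑ j, (ν j).real univ := Finset.sum_nonneg fun j _ => measureReal_nonneg
    have hR' := (div_le_iff₀ (by positivity)).mp hR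
    rw [← hr2] at hF
    nlinarith [mul_pos (mul_pos (by positivity : 0 < k * δ / 2) (sub_pos.mpr hRr))
      (by linarith : 0 < r), mul_nonneg (mul_nonneg hk.le hV) (by linarith : 0 ≤ r - 1),
      mul_le_mul_of_nonneg_right hR' (by linarith : 0 ≤ r)]
  obtain ⟨v, ⟨hv0, hvR⟩, hmin⟩ := (isCompact_setOf_sqrt_sum_sq_le R).exists_isMinOn_of_lt_of_notMem
    isClosed_setOf_forall_nonneg (continuousOn_frozenHamiltonian hbm hb R) (x₀ := 0)
    (fun _ => le_rfl) hout
  exact ⟨v, hv0, hvR, hmin⟩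

end FrozenHamiltonian

theorem IsMinOn.csInf_image_eq {α β : Type*} [ConditionallyCompleteLinearOrder β] {f : α → β}
    {s : Set α} {a : α} (h : IsMinOn f s a) (ha : a ∈ s) : sInf (f '' s) = f a :=
  IsLeast.csInf_eq ⟨mem_image_of_mem f ha, forall_mem_image.mpr h⟩

theorem sum_mul_sum_mul_transpose_mul {ι κ : Type*} [Fintype ι] [Fintype κ] (S : Matrix ι κ ℝ)
    (v : ι → ℝ) : ∑ i, ∑ k, v i * (∑ l, S i l * S k l) * v k = ∑ l, (∑ i, S i l * v i) ^ 2 := by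
  calc _ = ∑ i, ∑ k, ∑ l, S i l * v i * (S k l * v k) := by
        simp only [Finset.mul_sum, Finset.sum_mul]
        exact Finset.sum_congr rfl fun _ _ => Finset.sum_congr rfl fun _ _ =>
          Finset.sum_congr rfl fun _ _ => by ring
    _ = ∑ i, ∑ l, ∑ k, S i l * v i * (S k l * v k) :=
        Finset.sum_congr rfl fun _ _ => Finset.sum_comm
    _ = _ := by rw [Finset.sum_comm]; simp only [sq, Finset.sum_mul_sum]

section Riccati

variable {E : Type} [MeasurableSpace E] {m n ℓ : ℕ} (μ : ℝ → Fin m → ℝ)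
  (σ : ℝ → Matrix (Fin m) (Fin n) ℝ) (ν : Fin ℓ → Measure E) (β : Fin ℓ → ℝ → E → Fin m → ℝ)
  (t : ℝ) (v : Fin m → ℝ) (Pp Pm : ℝ)

theorem Hplus_eq_frozenHamiltonian :
    Hplus μ σ ν β t v Pp Pm = frozenHamiltonian ν (μ t) (σ t) (fun j => β j t) Pp Pm v :=
  rfl

theorem Hminus_eq_frozenHamiltonian :
    Hminus μ σ ν β t v Pp Pm = frozenHamiltonian ν (-μ t) (σ t) (fun j => -β j t) Pm Pp v := by
  simp only [Hminus, frozenHamiltonian, jumpCost, Pi.neg_apply, mul_neg, neg_mul,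
    Finset.sum_neg_distrib, ← sub_eq_add_neg, sub_neg_eq_add]

theorem sum_mul_SigmaMat_mul [∀ j, IsFiniteMeasure (ν j)] {C : ℝ}
    (hbm : ∀ j, Measurable (β j t)) (hb : ∀ j e i, |β j t e i| ≤ C) :
    ∑ i, ∑ k, v i * SigmaMat σ ν β t i k * v k
      = ∑ k, (∑ i, σ t i k * v i) ^ 2 + ∑ j, ∫ e, (∑ i, v i * β j t e i) ^ 2 ∂(ν j) := by
  have hint : ∀ j i k, Integrable (fun e => β j t e i * β j t e k) (ν j) := fun j i k =>
    .of_bound (by fun_prop) (C * C) <| ae_of_all _ fun e => by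
      rw [Real.norm_eq_abs, abs_mul]
      exact mul_le_mul (hb j e i) (hb j e k) (abs_nonneg _) ((abs_nonneg _).trans (hb j e i))
  have hjump : ∀ j, ∫ e, (∑ i, v i * β j t e i) ^ 2 ∂(ν j)
      = ∑ i, ∑ k, v i * (∫ e, β j t e i * β j t e k ∂(ν j)) * v k := by
    intro j
    simp_rw [sq, Finset.sum_mul_sum]
    rw [integral_finsetSum _ fun i _ => integrable_finsetSum _ fun k _ =>
      ((hint j i k).const_mul (v i * v k)).congr (ae_of_all _ fun e => by ring)]
    refine Finset.sum_congr rfl fun i _ => ?_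
    rw [integral_finsetSum _ fun k _ =>
      ((hint j i k).const_mul (v i * v k)).congr (ae_of_all _ fun e => by ring)]
    refine Finset.sum_congr rfl fun k _ => ?_
    rw [← integral_const_mul, ← integral_mul_const]
    exact integral_congr_ae (ae_of_all _ fun e => by ring)
  simp only [SigmaMat, Matrix.of_apply, mul_add, add_mul, Finset.sum_add_distrib,
    sum_mul_sum_mul_transpose_mul, hjump]
  congr 1
  simp only [Finset.mul_sum, Finset.sum_mul]
  calc _ = ∑ i, ∑ j, ∑ k, v i * (∫ e, β j t e i * β j t e k ∂(ν j)) * v k :=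
        Finset.sum_congr rfl fun _ _ => Finset.sum_comm
    _ = _ := Finset.sum_comm

end Riccati

theorem stmt3_general {E : Type} [MeasurableSpace E] {m n ℓ : ℕ}
    (T : ℝ)
    (μ : ℝ → Fin m → ℝ) (σ : ℝ → Matrix (Fin m) (Fin n) ℝ)
    (ν : Fin ℓ → Measure E) [∀ j, IsFiniteMeasure (ν j)]
    (β : Fin ℓ → ℝ → E → Fin m → ℝ)
    (hμbd : ∃ C, ∀ t ∈ Icc (0:ℝ) T, ∀ i, |μ t i| ≤ C)
    (hβmeas : ∀ j, Measurable (Function.uncurry (β j)))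
    (hβbd : ∃ C, ∀ j, ∀ t ∈ Icc (0:ℝ) T, ∀ e i, |β j t e i| ≤ C)
    (δ : ℝ) (hδ : 0 < δ)
    (hell : ∀ t ∈ Icc (0:ℝ) T, ∀ v : Fin m → ℝ,
      δ * ∑ i, v i ^ 2 ≤ ∑ i, ∑ k, v i * SigmaMat σ ν β t i k * v k)
    (Pp Pm : ℝ → ℝ)
    (hsol : IsPositiveRiccatiSolution μ σ ν β T Pp Pm) :
    ∃ C : ℝ, 0 < C ∧ ∀ t ∈ Icc (0:ℝ) T,
      ∃ vp vm : Fin m → ℝ,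
        (∀ i, 0 ≤ vp i) ∧ (∀ i, 0 ≤ vm i) ∧
        Real.sqrt (∑ i, vp i ^ 2) ≤ C ∧ Real.sqrt (∑ i, vm i ^ 2) ≤ C ∧
        Hplus μ σ ν β t vp (Pp t) (Pm t) = HstarPlus μ σ ν β t (Pp t) (Pm t) ∧
        Hminus μ σ ν β t vm (Pp t) (Pm t) = HstarMinus μ σ ν β t (Pp t) (Pm t) := by
  obtain ⟨hPpc, hPmc, hpos, -, -⟩ := hsol
  obtain ⟨k, hk, hkP⟩ := isCompact_Icc.exists_forall_le' (hPpc.inf hPmc)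
    fun t ht => lt_min (hpos t ht).1 (hpos t ht).2
  obtain ⟨K, hK⟩ := isCompact_Icc.bddAbove_image (hPpc.sup hPmc)
  obtain ⟨Cμ, hCμ⟩ := hμbd
  obtain ⟨Cβ, hCβ⟩ := hβbd
  set R := max 1 ((2 * K * Cμ * Fintype.card (Fin m) + k * ∑ j, (ν j).real univ) / (k * δ / 2))
  refine ⟨R, one_pos.trans_le (le_max_left _ _), fun t ht => ?_⟩
  have hkt := le_inf_iff.mp (hkP t ht)
  have hKt := sup_le_iff.mp (hK (mem_image_of_mem _ ht))
  have hbm : ∀ j, Measurable (β j t) := fun j => (hβmeas j).comp measurable_prodMk_left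
  have hellt := fun v => (hell t ht v).trans_eq (sum_mul_SigmaMat_mul σ ν β t v hbm (hCβ · t ht))
  obtain ⟨vp, hvp0, hvpR, hvp⟩ := exists_isMinOn_frozenHamiltonian hbm (hCβ · t ht) (hCμ t ht)
    hellt hkt.1 hkt.2 hKt.1 hδ hk (le_max_left _ _) (le_max_right _ _)
  obtain ⟨vm, hvm0, hvmR, hvm⟩ := exists_isMinOn_frozenHamiltonian (c := -μ t)
    (fun j => (hbm j).neg) (by simpa using (hCβ · t ht)) (by simpa using hCμ t ht)
    (by simpa using hellt) hkt.2 hkt.1 hKt.2 hδ hk (le_max_left _ _) (le_max_right _ _)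
  refine ⟨vp, vm, hvp0, hvm0, hvpR, hvmR, ?_, ?_⟩
  · simp only [HstarPlus, Hplus_eq_frozenHamiltonian]
    exact (hvp.csInf_image_eq hvp0).symm
  · simp only [HstarMinus, Hminus_eq_frozenHamiltonian]
    exact (hvm.csInf_image_eq hvm0).symm

/-- along any positive solution of the Riccati system, the infima defining
`H*₊` and `H*₋` are attained at points of `ℝ^m₊` of uniformly bounded (Euclidean) norm. -/
theorem stmt3 {E : Type} [MeasurableSpace E] {m n ℓ : ℕ}
    (hm : 0 < m) (hn : 0 < n) (hl : 0 < ℓ)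
    (T : ℝ) (hT : 0 < T)
    (μ : ℝ → Fin m → ℝ) (σ : ℝ → Matrix (Fin m) (Fin n) ℝ)
    (ν : Fin ℓ → Measure E) [∀ j, IsFiniteMeasure (ν j)]
    (β : Fin ℓ → ℝ → E → Fin m → ℝ)
    (hμmeas : Measurable μ) (hμbd : ∃ C, ∀ t ∈ Icc (0:ℝ) T, ∀ i, |μ t i| ≤ C)
    (hσmeas : ∀ i k, Measurable fun t => σ t i k)
    (hσbd : ∃ C, ∀ t ∈ Icc (0:ℝ) T, ∀ i k, |σ t i k| ≤ C)
    (hβmeas : ∀ j, Measurable (Function.uncurry (β j)))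
    (hβbd : ∃ C, ∀ j, ∀ t ∈ Icc (0:ℝ) T, ∀ e i, |β j t e i| ≤ C)
    (hβgt : ∀ j, ∀ t ∈ Icc (0:ℝ) T, ∀ e i, -1 < β j t e i)
    (δ : ℝ) (hδ : 0 < δ)
    (hell : ∀ t ∈ Icc (0:ℝ) T, ∀ v : Fin m → ℝ,
      δ * ∑ i, v i ^ 2 ≤ ∑ i, ∑ k, v i * SigmaMat σ ν β t i k * v k)
    (Pp Pm : ℝ → ℝ)
    (hsol : IsPositiveRiccatiSolution μ σ ν β T Pp Pm) :
    ∃ C : ℝ, 0 < C ∧ ∀ t ∈ Icc (0:ℝ) T,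
      ∃ vp vm : Fin m → ℝ,
        (∀ i, 0 ≤ vp i) ∧ (∀ i, 0 ≤ vm i) ∧
        Real.sqrt (∑ i, vp i ^ 2) ≤ C ∧ Real.sqrt (∑ i, vm i ^ 2) ≤ C ∧
        Hplus μ σ ν β t vp (Pp t) (Pm t) = HstarPlus μ σ ν β t (Pp t) (Pm t) ∧
        Hminus μ σ ν β t vm (Pp t) (Pm t) = HstarMinus μ σ ν β t (Pp t) (Pm t) :=
  stmt3_general T μ σ ν β hμbd hβmeas hβbd δ hδ hell Pp Pm hsol
end

section
/- Let x, z ∈ ℝ with z > x, and let P₊, P₋ ∈ ℝ with 0 < P₊ ≤ 1 and 0 < P₋ < 1. Define f(d) = P₊((x−d)⁺)² + P₋((x−d)⁻)² − (d−z)² for d ∈ ℝ, and set d* = (z − x P₋)/(1 − P₋). Then x − d* < 0, and sup_{d∈ℝ} f(d) = f(d*) = (P₋/(1−P₋)) (z−x)². -/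
/-! For `d ≥ x` the objective is `q (d - x)² - ((d - x) - (z - x))²`, and completing the square
shows it is maximal, with value `q/(1-q) (z-x)²`, at `d - x = (z - x)/(1 - q)`. For `d ≤ x` it is
`p (x - d)² - ((x - d) + (z - x))² ≤ 0` because `p ≤ 1` and `z > x`. -/

namespace MeanVariance

lemma mul_sq_sub_sq_eq {q : ℝ} (hq : q ≠ 1) (a b : ℝ) :
    q * a ^ 2 - (a - b) ^ 2 = q / (1 - q) * b ^ 2 - (1 - q) * (a - b / (1 - q)) ^ 2 := by
  have : 1 - q ≠ 0 := sub_ne_zero.mpr hq.symm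
  field_simp
  ring

lemma mul_sq_sub_sq_le {q : ℝ} (hq : q < 1) (a b : ℝ) :
    q * a ^ 2 - (a - b) ^ 2 ≤ q / (1 - q) * b ^ 2 := by
  rw [mul_sq_sub_sq_eq hq.ne]
  have : 0 ≤ (1 - q) * (a - b / (1 - q)) ^ 2 := mul_nonneg (by linarith) (sq_nonneg _)
  linarith

lemma mul_sq_sub_sq_add_nonpos {p a b : ℝ} (hp : p ≤ 1) (ha : 0 ≤ a) (hb : 0 ≤ b) :
    p * a ^ 2 - (a + b) ^ 2 ≤ 0 := by
  nlinarith [mul_nonneg ha hb, sq_nonneg a, sq_nonneg b]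

variable (p q x z : ℝ)

/-- The dual objective `d ↦ V(0,x;d) − (d−z)²`, with `P₊ = p` and `P₋ = q`. -/
def dualObjective (d : ℝ) : ℝ :=
  p * (max (x - d) 0) ^ 2 + q * (max (-(x - d)) 0) ^ 2 - (d - z) ^ 2

noncomputable def dualMaximizer : ℝ := (z - x * q) / (1 - q)

variable {p q x z}

lemma dualObjective_of_le {d : ℝ} (h : d ≤ x) :
    dualObjective p q x z d = p * (x - d) ^ 2 - ((x - d) + (z - x)) ^ 2 := by
  rw [dualObjective, max_eq_left (sub_nonneg.mpr h), max_eq_right (by linarith)]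
  ring

lemma dualObjective_of_ge {d : ℝ} (h : x ≤ d) :
    dualObjective p q x z d = q * (d - x) ^ 2 - ((d - x) - (z - x)) ^ 2 := by
  rw [dualObjective, max_eq_right (sub_nonpos.mpr h), max_eq_left (by linarith)]
  ring

lemma dualMaximizer_sub (hq : q ≠ 1) : dualMaximizer q x z - x = (z - x) / (1 - q) := by
  have : 1 - q ≠ 0 := sub_ne_zero.mpr hq.symm
  rw [dualMaximizer]
  field_simp
  ring

lemma lt_dualMaximizer (hxz : x < z) (hq : q < 1) : x < dualMaximizer q x z := by
  have : 0 < dualMaximizer q x z - x := by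
    rw [dualMaximizer_sub hq.ne]
    exact div_pos (sub_pos.mpr hxz) (sub_pos.mpr hq)
  linarith

lemma dualObjective_le (hp : p ≤ 1) (hq0 : 0 ≤ q) (hq1 : q < 1) (hxz : x ≤ z) (d : ℝ) :
    dualObjective p q x z d ≤ q / (1 - q) * (z - x) ^ 2 := by
  rcases le_total d x with hdx | hxd
  · rw [dualObjective_of_le hdx]
    have : 0 ≤ q / (1 - q) * (z - x) ^ 2 :=
      mul_nonneg (div_nonneg hq0 (sub_nonneg.mpr hq1.le)) (sq_nonneg _)
    linarith [mul_sq_sub_sq_add_nonpos hp (sub_nonneg.mpr hdx) (sub_nonneg.mpr hxz)]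
  · rw [dualObjective_of_ge hxd]
    exact mul_sq_sub_sq_le hq1 _ _

/-- At `d*` the completed square `(d - x) - (z - x)/(1 - q)` vanishes. -/
lemma dualObjective_dualMaximizer (hxz : x ≤ z) (hq : q < 1) :
    dualObjective p q x z (dualMaximizer q x z) = q / (1 - q) * (z - x) ^ 2 := by
  have hgap := dualMaximizer_sub (x := x) (z := z) hq.ne
  have hx : x ≤ dualMaximizer q x z := by
    have : 0 ≤ (z - x) / (1 - q) := div_nonneg (sub_nonneg.mpr hxz) (sub_nonneg.mpr hq.le)
    linarith
  rw [dualObjective_of_ge hx, mul_sq_sub_sq_eq hq.ne, hgap, sub_self]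
  ring

end MeanVariance

open MeanVariance in
theorem stmt5_general (x z : ℝ) (hxz : x < z) (Pp Pm : ℝ)
    (hPp1 : Pp ≤ 1) (hPm : 0 < Pm) (hPm1 : Pm < 1) :
    let f : ℝ → ℝ := fun d =>
      Pp * (max (x - d) 0) ^ 2 + Pm * (max (-(x - d)) 0) ^ 2 - (d - z) ^ 2
    let dstar : ℝ := (z - x * Pm) / (1 - Pm)
    x - dstar < 0 ∧ IsGreatest (Set.range f) (f dstar) ∧
      f dstar = Pm / (1 - Pm) * (z - x) ^ 2 := by
  intro f dstar
  have hval : f dstar = Pm / (1 - Pm) * (z - x) ^ 2 :=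
    dualObjective_dualMaximizer hxz.le hPm1
  refine ⟨sub_neg.mpr (lt_dualMaximizer hxz hPm1), ⟨⟨dstar, rfl⟩, ?_⟩, hval⟩
  rintro _ ⟨d, rfl⟩
  rw [hval]
  exact dualObjective_le hPp1 hPm.le hPm1 hxz.le d

/-- the Lagrange-duality maximization `sup_d [V(0,x;d) − (d−z)²]` is attained at
`d* = (z − x P₋)/(1 − P₋)`, with `x − d* < 0` and maximal value `(P₋/(1−P₋))(z−x)²`. -/
theorem stmt5 (x z : ℝ) (hxz : x < z) (Pp Pm : ℝ)
    (hPp : 0 < Pp) (hPp1 : Pp ≤ 1) (hPm : 0 < Pm) (hPm1 : Pm < 1) :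
    let f : ℝ → ℝ := fun d =>
      Pp * (max (x - d) 0) ^ 2 + Pm * (max (-(x - d)) 0) ^ 2 - (d - z) ^ 2
    let dstar : ℝ := (z - x * Pm) / (1 - Pm)
    x - dstar < 0 ∧ IsGreatest (Set.range f) (f dstar) ∧
      f dstar = Pm / (1 - Pm) * (z - x) ^ 2 :=
  stmt5_general x z hxz Pp Pm hPp1 hPm hPm1
end

section
/- Let μ, σ, β be positive real constants and P₋ > 0, and define for v ≥ 0: H₋(v) = P₋σ²v² − 2P₋μv + P₋( ((1−βv)⁺)² − 1 + 2βv ) + ((1−βv)⁻)². Then: (i) if σ² + β² ≤ βμ, then inf_{v ≥ 0} H₋(v) = −(P₋μ − P₋β + β)²/(σ²P₋ + β²) + 1 − P₋, attained at v̂ = (P₋μ − P₋β + β)/(P₋σ² + β²), which satisfies v̂ ≥ 1/β; (ii) if σ² + β² ≥ βμ, then inf_{v ≥ 0} H₋(v) = −μ²P₋/(σ² + β²), attained at v̂ = μ/(σ² + β²), which satisfies v̂ ≤ 1/β. -/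
set_option maxHeartbeats 1000000


/-- explicit minimization of the one-dimensional Hamiltonian
`H₋(v) = P₋σ²v² − 2P₋μv + P₋(((1−βv)⁺)² − 1 + 2βv) + ((1−βv)⁻)²` over `v ≥ 0`,
for positive constants `μ, σ, β` and `P₋ > 0`. -/
theorem stmt18 (μ σ β Pm : ℝ) (hμ : 0 < μ) (hσ : 0 < σ) (hβ : 0 < β) (hPm : 0 < Pm) :
    let H : ℝ → ℝ := fun v =>
      Pm * σ ^ 2 * v ^ 2 - 2 * Pm * μ * v
        + Pm * ((max (1 - β * v) 0) ^ 2 - 1 + 2 * β * v)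
        + (max (-(1 - β * v)) 0) ^ 2
    (σ ^ 2 + β ^ 2 ≤ β * μ →
      let vhat : ℝ := (Pm * μ - Pm * β + β) / (Pm * σ ^ 2 + β ^ 2)
      0 ≤ vhat ∧ 1 / β ≤ vhat ∧
      (∀ v : ℝ, 0 ≤ v → H vhat ≤ H v) ∧
      H vhat = -(Pm * μ - Pm * β + β) ^ 2 / (σ ^ 2 * Pm + β ^ 2) + 1 - Pm) ∧
    (β * μ ≤ σ ^ 2 + β ^ 2 →
      let vhat : ℝ := μ / (σ ^ 2 + β ^ 2)
      0 ≤ vhat ∧ vhat ≤ 1 / β ∧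
      (∀ v : ℝ, 0 ≤ v → H vhat ≤ H v) ∧
      H vhat = -(μ ^ 2 * Pm) / (σ ^ 2 + β ^ 2)) := by
  intro H
  have hD1 : 0 < Pm * σ ^ 2 + β ^ 2 := by positivity
  have hD2 : 0 < σ ^ 2 + β ^ 2 := by positivity
  have Hle : ∀ v : ℝ, β * v ≤ 1 →
      H v = Pm * (σ ^ 2 + β ^ 2) * v ^ 2 - 2 * Pm * μ * v := by
    intro v hv
    have h1 : max (1 - β * v) 0 = 1 - β * v := max_eq_left (by linarith)
    have h2 : max (-(1 - β * v)) 0 = 0 := max_eq_right (by linarith)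
    simp only [H, h1, h2]; ring
  have Hge : ∀ v : ℝ, 1 ≤ β * v →
      H v = (Pm * σ ^ 2 + β ^ 2) * v ^ 2 - 2 * (Pm * μ - Pm * β + β) * v + 1 - Pm := by
    intro v hv
    have h1 : max (1 - β * v) 0 = 0 := max_eq_right (by linarith)
    have h2 : max (-(1 - β * v)) 0 = -(1 - β * v) := max_eq_left (by linarith)
    simp only [H, h1, h2]; ring
  constructor
  · intro hc vhat
    have hA : 0 < Pm * μ - Pm * β + β := by nlinarith [sq_nonneg β, sq_nonneg σ]
    have hβA : Pm * σ ^ 2 + β ^ 2 ≤ β * (Pm * μ - Pm * β + β) := by nlinarith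
    have hv0 : 0 ≤ vhat := le_of_lt (div_pos hA hD1)
    have hv1 : 1 / β ≤ vhat := by
      rw [div_le_div_iff₀ hβ hD1]; linarith
    have hvhat : 1 ≤ β * vhat := by
      rw [show β * vhat = vhat * β by ring, ← div_le_iff₀ hβ] at *
      simpa using hv1
    have hHv : H vhat = -(Pm * μ - Pm * β + β) ^ 2 / (σ ^ 2 * Pm + β ^ 2) + 1 - Pm := by
      rw [Hge vhat hvhat]
      show (Pm * σ ^ 2 + β ^ 2) * ((Pm * μ - Pm * β + β) / (Pm * σ ^ 2 + β ^ 2)) ^ 2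
        - 2 * (Pm * μ - Pm * β + β) * ((Pm * μ - Pm * β + β) / (Pm * σ ^ 2 + β ^ 2)) + 1 - Pm = _
      field_simp
      ring
    refine ⟨hv0, hv1, ?_, hHv⟩
    intro v hv
    rw [hHv]
    rcases le_total (β * v) 1 with h | h
    · rw [Hle v h]
      have key : -(Pm * μ - Pm * β + β) ^ 2 + (1 - Pm) * (σ ^ 2 * Pm + β ^ 2)
          ≤ (Pm * (σ ^ 2 + β ^ 2) * v ^ 2 - 2 * Pm * μ * v) * (σ ^ 2 * Pm + β ^ 2) := by
        have h1 : 0 ≤ (1 - β * v) * (2 * Pm * μ * β - Pm * (σ ^ 2 + β ^ 2) * (1 + β * v)) := by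
          have : Pm * (σ ^ 2 + β ^ 2) * (1 + β * v) ≤ 2 * Pm * μ * β := by
            nlinarith [mul_nonneg (mul_nonneg hPm.le hD2.le) (sub_nonneg.2 h),
              mul_nonneg hPm.le (sub_nonneg.2 hc)]
          nlinarith
        have h2 := sq_nonneg (σ ^ 2 * Pm + β ^ 2 - β * (Pm * μ - Pm * β + β))
        have hd0 : (0:ℝ) ≤ σ ^ 2 * Pm + β ^ 2 := by positivity
        nlinarith [mul_nonneg hd0 h1, h2, mul_pos hβ hβ]
      have hd : (0:ℝ) < σ ^ 2 * Pm + β ^ 2 := by positivity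
      rw [show -(Pm * μ - Pm * β + β) ^ 2 / (σ ^ 2 * Pm + β ^ 2) + 1 - Pm
        = (-(Pm * μ - Pm * β + β) ^ 2 + (1 - Pm) * (σ ^ 2 * Pm + β ^ 2)) / (σ ^ 2 * Pm + β ^ 2)
        from by field_simp; ring, div_le_iff₀ hd]
      nlinarith [key]
    · rw [Hge v h]
      have hd : (0:ℝ) < σ ^ 2 * Pm + β ^ 2 := by positivity
      rw [show -(Pm * μ - Pm * β + β) ^ 2 / (σ ^ 2 * Pm + β ^ 2) + 1 - Pm
        = (-(Pm * μ - Pm * β + β) ^ 2 + (1 - Pm) * (σ ^ 2 * Pm + β ^ 2)) / (σ ^ 2 * Pm + β ^ 2)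
        from by field_simp; ring, div_le_iff₀ hd]
      nlinarith [sq_nonneg ((Pm * σ ^ 2 + β ^ 2) * v - (Pm * μ - Pm * β + β))]
  · intro hc vhat
    have hv0 : 0 ≤ vhat := le_of_lt (div_pos hμ hD2)
    have hv1 : vhat ≤ 1 / β := by
      rw [div_le_div_iff₀ hD2 hβ]; linarith
    have hvhat : β * vhat ≤ 1 := by
      rw [show β * vhat = vhat * β by ring, ← le_div_iff₀ hβ]; simpa using hv1
    have hHv : H vhat = -(μ ^ 2 * Pm) / (σ ^ 2 + β ^ 2) := by
      rw [Hle vhat hvhat]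
      show Pm * (σ ^ 2 + β ^ 2) * (μ / (σ ^ 2 + β ^ 2)) ^ 2
        - 2 * Pm * μ * (μ / (σ ^ 2 + β ^ 2)) = _
      field_simp
      ring
    refine ⟨hv0, hv1, ?_, hHv⟩
    intro v hv
    rw [hHv]
    rcases le_total (β * v) 1 with h | h
    · rw [Hle v h, div_le_iff₀ hD2]
      nlinarith [mul_nonneg hPm.le (sq_nonneg ((σ ^ 2 + β ^ 2) * v - μ))]
    · rw [Hge v h, div_le_iff₀ hD2]
      have hβA : β * (Pm * μ - Pm * β + β) ≤ Pm * σ ^ 2 + β ^ 2 := by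
        nlinarith [mul_le_mul_of_nonneg_left hc hPm.le]
      have h1 : 0 ≤ (β * v - 1) *
          ((Pm * σ ^ 2 + β ^ 2) * (β * v + 1) - 2 * β * (Pm * μ - Pm * β + β)) := by
        have : 0 ≤ (Pm * σ ^ 2 + β ^ 2) * (β * v + 1) - 2 * β * (Pm * μ - Pm * β + β) := by
          nlinarith [mul_nonneg (sub_nonneg.2 h) hD1.le]
        nlinarith [mul_nonneg (sub_nonneg.2 h) this]
      have h2 : 0 ≤ Pm * (σ ^ 2 + β ^ 2 - β * μ) ^ 2 :=
        mul_nonneg hPm.le (sq_nonneg _)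
      nlinarith [mul_nonneg hD2.le h1, h2, mul_pos hβ hβ]
end
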